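/- arXiv:1602.01306 — 2 statements merged into one kernel-verified Lean document; each statement's English description precedes it below -/
import Mathlib

section
/- Let D = (E,𝓕) be a vf-safe delta-matroid. For A ⊆ E set D^{π(A)} := (D+A)*E. Then for every integer λ, P(D;λ) = Σ_{A⊆E} (−1)^{|A|} χ(D^{π(A)};λ), where P(D;λ) := Σ_{X⊆E} (−1)^{|X|} λ^{d(D*E*̄X)} is the Penrose polynomial of D, d(D') denotes the minimum cardinality of a feasible set of the set system D', and χ(D';λ) := Σ_{S⊆E} (−1)^{|S|} λ^{r'(E)−r'(S)} is the characteristic polynomial of (D')_min, with r'(S) := max{|F ∩ S| : F ∈ 𝓕_min(D')}. -/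
open scoped symmDiff

structure SetSystem (α : Type) [DecidableEq α] where
  E : Finset α
  F : Finset (Finset α)

namespace SetSystem

variable {α : Type} [DecidableEq α]

/-- A delta-matroid: nonempty collection of feasible subsets of the ground set
satisfying the symmetric exchange axiom. -/
def IsDeltaMatroid (D : SetSystem α) : Prop :=
  D.F.Nonempty ∧ (∀ F ∈ D.F, F ⊆ D.E) ∧
    ∀ X ∈ D.F, ∀ Y ∈ D.F, ∀ u ∈ X ∆ Y, ∃ v ∈ X ∆ Y, X ∆ ({u, v} : Finset α) ∈ D.F

/-- A matroid, viewed as a delta-matroid whose feasible sets are equicardinal. -/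
def IsMatroid (D : SetSystem α) : Prop :=
  D.IsDeltaMatroid ∧ ∀ F₁ ∈ D.F, ∀ F₂ ∈ D.F, F₁.card = F₂.card

/-- The twist `D*A`. -/
def twist (D : SetSystem α) (A : Finset α) : SetSystem α :=
  ⟨D.E, D.F.image fun F => A ∆ F⟩

/-- The dual `D* := D * E`. -/
def dual (D : SetSystem α) : SetSystem α := D.twist D.E

def IsLoop (D : SetSystem α) (e : α) : Prop := ∀ F ∈ D.F, e ∉ F

def IsColoop (D : SetSystem α) (e : α) : Prop := ∀ F ∈ D.F, e ∈ F

open Classical in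
/-- Deletion of a single element (when `e` is a coloop, `D∖e := D/e`). -/
noncomputable def del (D : SetSystem α) (e : α) : SetSystem α :=
  if D.IsColoop e then ⟨D.E.erase e, D.F.image fun F => F.erase e⟩
  else ⟨D.E.erase e, D.F.filter fun F => e ∉ F⟩

open Classical in
/-- Contraction of a single element (when `e` is a loop, `D/e := D∖e`). -/
noncomputable def con (D : SetSystem α) (e : α) : SetSystem α :=
  if D.IsLoop e then ⟨D.E.erase e, D.F.filter fun F => e ∉ F⟩
  else ⟨D.E.erase e, (D.F.filter fun F => e ∈ F).image fun F => F.erase e⟩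

/-- Loop complementation on a single element. -/
def lc (D : SetSystem α) (e : α) : SetSystem α :=
  ⟨D.E, D.F ∆ ((D.F.filter fun F => e ∉ F).image fun F => insert e F)⟩

/-- Loop complementation on a set of elements (applied in some order;
the operation is order-independent). -/
noncomputable def lcSet (D : SetSystem α) (A : Finset α) : SetSystem α :=
  A.toList.foldl lc D

/-- The dual pivot `D *̄ A := ((D*A)+A)*A`. -/
noncomputable def dpivot (D : SetSystem α) (A : Finset α) : SetSystem α :=
  ((D.twist A).lcSet A).twist A

/-- Set systems reachable from `D` by sequences of twists and loop complementations. -/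
inductive Reachable : SetSystem α → SetSystem α → Prop
  | refl (D : SetSystem α) : Reachable D D
  | twist (D D' : SetSystem α) (A : Finset α) (hA : A ⊆ D'.E) :
      Reachable D D' → Reachable D (D'.twist A)
  | lc (D D' : SetSystem α) (A : Finset α) (hA : A ⊆ D'.E) :
      Reachable D D' → Reachable D (D'.lcSet A)

/-- A vf-safe delta-matroid: any sequence of twists and loop complementations
yields a delta-matroid. -/
def VfSafe (D : SetSystem α) : Prop := ∀ D', Reachable D D' → D'.IsDeltaMatroid

/-- The minimum-cardinality feasible sets. -/
def Fmin (D : SetSystem α) : Finset (Finset α) :=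
  D.F.filter fun F => ∀ F' ∈ D.F, F.card ≤ F'.card

/-- The maximum-cardinality feasible sets. -/
def Fmax (D : SetSystem α) : Finset (Finset α) :=
  D.F.filter fun F => ∀ F' ∈ D.F, F'.card ≤ F.card

/-- The lower matroid `D_min`. -/
def Dmin (D : SetSystem α) : SetSystem α := ⟨D.E, D.Fmin⟩

def IsRibbonLoop (D : SetSystem α) (e : α) : Prop := ∀ F ∈ D.Fmin, e ∉ F

def IsNonorientableRL (D : SetSystem α) (e : α) : Prop :=
  D.IsRibbonLoop e ∧ (D.twist {e}).IsRibbonLoop e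

def IsOrientableRL (D : SetSystem α) (e : α) : Prop :=
  D.IsRibbonLoop e ∧ (D.dpivot {e}).IsRibbonLoop e

def IsTrivialOrientableRL (D : SetSystem α) (e : α) : Prop :=
  D.IsOrientableRL e ∧ D.IsLoop e

def IsTrivialNonorientableRL (D : SetSystem α) (e : α) : Prop :=
  D.IsNonorientableRL e ∧ (D.lc e).IsLoop e


/-- `d(D)`: the minimum cardinality of a feasible set of `D`. -/
noncomputable def minCard (D : SetSystem α) : ℕ := sInf {n : ℕ | ∃ F ∈ D.F, n = F.card}

/-- The rank function of the lower matroid `D_min`: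
`r(S) = max {|F ∩ S| : F ∈ 𝓕_min(D)}`. -/
noncomputable def rankMin (D : SetSystem α) (S : Finset α) : ℕ :=
  sSup {n : ℕ | ∃ F ∈ D.Fmin, n = (F ∩ S).card}

/-- The characteristic polynomial of `D` (i.e. of `D_min`), evaluated at `l`. -/
noncomputable def charPoly (D : SetSystem α) (l : ℤ) : ℤ :=
  ∑ S ∈ D.E.powerset, (-1 : ℤ) ^ S.card * l ^ (D.rankMin D.E - D.rankMin S)

/-- The Penrose polynomial of `D`, evaluated at `l`:
`P(D;λ) = Σ_{X⊆E} (−1)^{|X|} λ^{d(D*E*̄X)}`. -/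
noncomputable def penrose (D : SetSystem α) (l : ℤ) : ℤ :=
  ∑ X ∈ D.E.powerset, (-1 : ℤ) ^ X.card * l ^ minCard ((D.twist D.E).dpivot X)

/-!
For a delta-matroid the lower matroid satisfies `r(E) - r(S) = min {|F \ S| : F feasible}`, by the
symmetric exchange axiom. Expanding every `χ((D+A)*E; λ)` this way and exchanging the two sums, the
term of `S` is `(-1)^|S| Σ_A (-1)^|A| λ^m(A,S)`, where `m(A,S)` is that minimum for `(D+A)*E`.
Loop complementation at some `s ∈ S` does not change `m(·,S)`, so for `S ≠ ∅` the terms of `A` and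
`A ∆ {s}` cancel. Only `S = ∅` survives, and `m(A,∅) = d((D+A)*E) = d(D*E*̄A)`.
-/
@[ext]
lemma ext {D D' : SetSystem α} (hE : D.E = D'.E) (hF : ∀ f, f ∈ D.F ↔ f ∈ D'.F) : D = D' := by
  cases D; cases D'
  simp only [mk.injEq]
  exact ⟨hE, Finset.ext hF⟩

@[simp]
lemma twist_E (D : SetSystem α) (A : Finset α) : (D.twist A).E = D.E := rfl

@[simp]
lemma lcSet_E (D : SetSystem α) (A : Finset α) : (D.lcSet A).E = D.E := by
  rw [lcSet]
  induction A.toList generalizing D with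
  | nil => rfl
  | cons x l ih => exact ih (D.lc x)

lemma mem_twist {D : SetSystem α} {A f : Finset α} : f ∈ (D.twist A).F ↔ A ∆ f ∈ D.F := by
  simp only [twist, Finset.mem_image]
  exact ⟨by rintro ⟨g, hg, rfl⟩; simpa, fun h => ⟨A ∆ f, h, by simp⟩⟩

lemma mem_lc {D : SetSystem α} {e : α} {f : Finset α} :
    f ∈ (D.lc e).F ↔ Xor (f ∈ D.F) (e ∈ f ∧ f.erase e ∈ D.F) := by
  have hinsert : f ∈ (D.F.filter fun F => e ∉ F).image (insert e) ↔ e ∈ f ∧ f.erase e ∈ D.F := by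
    simp only [Finset.mem_image, Finset.mem_filter]
    constructor
    · rintro ⟨g, ⟨hg, hge⟩, rfl⟩
      simpa [Finset.erase_insert hge] using hg
    · rintro ⟨hef, hf⟩
      exact ⟨f.erase e, ⟨hf, Finset.notMem_erase e f⟩, Finset.insert_erase hef⟩
  simp only [lc, Finset.mem_symmDiff, hinsert, xor_def]

lemma twist_twist (D : SetSystem α) (A B : Finset α) :
    (D.twist B).twist A = D.twist (A ∆ B) := by
  ext f
  · rfl
  · rw [mem_twist, mem_twist, mem_twist, ← symmDiff_assoc, symmDiff_comm B A]

lemma lc_lc (D : SetSystem α) (e : α) : (D.lc e).lc e = D := by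
  ext f
  · rfl
  · simp only [mem_lc, Finset.notMem_erase, false_and, xor_def]
    tauto

lemma lc_comm (D : SetSystem α) (e e' : α) : (D.lc e).lc e' = (D.lc e').lc e := by
  ext f
  · rfl
  · by_cases hee : e = e'
    · rw [hee]
    simp only [mem_lc, Finset.mem_erase, Finset.erase_right_comm (s := f) (a := e), Ne.symm hee,
      hee, Ne, not_false_eq_true, true_and]
    grind

lemma lc_twist (D : SetSystem α) {B : Finset α} {e : α} (he : e ∉ B) :
    (D.twist B).lc e = (D.lc e).twist B := by
  have hmem : ∀ f : Finset α, e ∈ B ∆ f ↔ e ∈ f := by simp [Finset.mem_symmDiff, he]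
  have herase : ∀ f : Finset α, B ∆ f.erase e = (B ∆ f).erase e := fun f => by
    ext a
    by_cases hae : a = e <;> simp [Finset.mem_symmDiff, hae, he]
  ext f
  · rfl
  · rw [mem_lc, mem_twist, mem_twist, mem_twist, mem_lc, hmem, herase]

instance : RightCommutative (lc : SetSystem α → α → SetSystem α) := ⟨lc_comm⟩

lemma lcSet_insert (D : SetSystem α) {A : Finset α} {s : α} (hs : s ∉ A) :
    D.lcSet (insert s A) = (D.lcSet A).lc s := by
  have hperm : (insert s A).toList.Perm (A.toList ++ [s]) :=
    (Finset.toList_insert hs).trans (List.perm_append_singleton _ _).symm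
  rw [lcSet, lcSet, hperm.foldl_eq, List.foldl_append]
  rfl

lemma lcSet_twist (D : SetSystem α) {A B : Finset α} (h : Disjoint A B) :
    (D.twist B).lcSet A = (D.lcSet A).twist B := by
  induction A using Finset.induction_on with
  | empty => simp [lcSet]
  | insert s A hs ih =>
    rw [Finset.disjoint_insert_left] at h
    rw [lcSet_insert _ hs, lcSet_insert _ hs, ih h.2, lc_twist _ h.1]

lemma twist_dpivot (D : SetSystem α) {A : Finset α} (hA : A ⊆ D.E) :
    (D.twist D.E).dpivot A = (D.lcSet A).twist D.E := by
  have hcompl : A ∆ D.E = D.E \ A := by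
    rw [symmDiff_comm, symmDiff_of_ge hA]
  rw [dpivot, twist_twist, hcompl, lcSet_twist D Finset.disjoint_sdiff, twist_twist, symmDiff_comm,
    Finset.sdiff_disjoint.symmDiff_eq_sup, Finset.sup_eq_union, Finset.sdiff_union_of_subset hA]

noncomputable def minCardSdiff (D : SetSystem α) (S : Finset α) : ℕ :=
  sInf {n : ℕ | ∃ F ∈ D.F, n = (F \ S).card}

lemma minCardSdiff_le {D : SetSystem α} {F : Finset α} (hF : F ∈ D.F) (S : Finset α) :
    D.minCardSdiff S ≤ (F \ S).card :=
  Nat.sInf_le ⟨F, hF, rfl⟩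

lemma exists_minCardSdiff_eq {D : SetSystem α} (hD : D.F.Nonempty) (S : Finset α) :
    ∃ F ∈ D.F, D.minCardSdiff S = (F \ S).card := by
  obtain ⟨F, hF⟩ := hD
  exact Nat.sInf_mem (s := {n | ∃ F ∈ D.F, n = (F \ S).card}) ⟨_, F, hF, rfl⟩

lemma minCard_eq_minCardSdiff_empty (D : SetSystem α) : D.minCard = D.minCardSdiff ∅ := by
  simp only [minCard, minCardSdiff, Finset.sdiff_empty]

lemma minCardSdiff_E {D : SetSystem α} (hD : D.IsDeltaMatroid) : D.minCardSdiff D.E = 0 := by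
  obtain ⟨F, hF⟩ := hD.1
  simpa [Finset.sdiff_eq_empty_iff_subset.2 (hD.2.1 F hF)] using minCardSdiff_le hF D.E

lemma bddAbove_card_inter (D : SetSystem α) (S : Finset α) :
    BddAbove {n : ℕ | ∃ F ∈ D.Fmin, n = (F ∩ S).card} :=
  ⟨S.card, by rintro n ⟨F, -, rfl⟩; exact Finset.card_le_card Finset.inter_subset_right⟩

lemma card_inter_le_rankMin {D : SetSystem α} {F : Finset α} (hF : F ∈ D.Fmin) (S : Finset α) :
    (F ∩ S).card ≤ D.rankMin S :=
  le_csSup (bddAbove_card_inter D S) ⟨F, hF, rfl⟩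

lemma exists_rankMin_eq {D : SetSystem α} (hD : D.Fmin.Nonempty) (S : Finset α) :
    ∃ F ∈ D.Fmin, D.rankMin S = (F ∩ S).card := by
  obtain ⟨F, hF⟩ := hD
  exact Nat.sSup_mem (s := {n | ∃ F ∈ D.Fmin, n = (F ∩ S).card}) ⟨_, F, hF, rfl⟩
    (bddAbove_card_inter D S)

lemma Fmin_nonempty {D : SetSystem α} (hD : D.F.Nonempty) : D.Fmin.Nonempty := by
  obtain ⟨F, hF, hmin⟩ := Finset.exists_min_image D.F Finset.card hD
  exact ⟨F, Finset.mem_filter.2 ⟨hF, hmin⟩⟩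

lemma Fmin_subset (D : SetSystem α) : D.Fmin ⊆ D.F := Finset.filter_subset _ _

lemma card_eq_of_mem_Fmin {D : SetSystem α} {F F' : Finset α} (hF : F ∈ D.Fmin)
    (hF' : F' ∈ D.Fmin) : F.card = F'.card :=
  le_antisymm ((Finset.mem_filter.1 hF).2 F' (D.Fmin_subset hF'))
    ((Finset.mem_filter.1 hF').2 F (D.Fmin_subset hF))

lemma mem_Fmin_of_card_le {D : SetSystem α} {F F' : Finset α} (hF : F ∈ D.Fmin) (hF' : F' ∈ D.F)
    (hcard : F'.card ≤ F.card) : F' ∈ D.Fmin :=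
  Finset.mem_filter.2 ⟨hF', fun G hG => hcard.trans ((Finset.mem_filter.1 hF).2 G hG)⟩

lemma card_symmDiff_pair_le {F : Finset α} {u : α} (hu : u ∈ F) (v : α) :
    (F ∆ {u, v}).card ≤ F.card :=
  calc (F ∆ {u, v}).card
      ≤ (insert v (F.erase u)).card := Finset.card_le_card fun a => by
        simp only [Finset.mem_symmDiff, Finset.mem_insert, Finset.mem_singleton, Finset.mem_erase]
        grind
    _ ≤ (F.erase u).card + 1 := Finset.card_insert_le v _
    _ = F.card := Finset.card_erase_add_one hu

lemma symmDiff_pair_sdiff_subset {F X T : Finset α} {u v : α} (hu : u ∈ F) (hv : v ∈ F ∆ X)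
    (hXT : X ⊆ T) : (F ∆ {u, v}) \ T ⊆ (F \ T).erase u := fun a => by
  have := @hXT a
  simp only [Finset.mem_symmDiff, Finset.mem_sdiff, Finset.mem_insert, Finset.mem_singleton,
    Finset.mem_erase] at hv ⊢
  grind

/-- Among minimum feasible sets take one with fewest elements outside `S ∪ X`; exchanging such an
element against `X` would give a feasible set that is no larger and has fewer of them. -/
lemma IsDeltaMatroid.exists_mem_Fmin_subset_union {D : SetSystem α} (hD : D.IsDeltaMatroid)
    {X : Finset α} (hX : X ∈ D.F) (S : Finset α) : ∃ F ∈ D.Fmin, F ⊆ S ∪ X := by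
  obtain ⟨F, hF, hmin⟩ := Finset.exists_min_image D.Fmin (fun F => (F \ (S ∪ X)).card)
    (Fmin_nonempty ⟨X, hX⟩)
  refine ⟨F, hF, Finset.sdiff_eq_empty_iff_subset.1 (Finset.card_eq_zero.1 ?_)⟩
  by_contra hne
  obtain ⟨u, hu⟩ := Finset.card_pos.1 (Nat.pos_of_ne_zero hne)
  have huF : u ∈ F := (Finset.mem_sdiff.1 hu).1
  have huX : u ∉ X := fun h => (Finset.mem_sdiff.1 hu).2 (Finset.mem_union_right S h)
  obtain ⟨v, hv, hexch⟩ :=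
    hD.2.2 F (D.Fmin_subset hF) X hX u (Finset.mem_symmDiff.2 (Or.inl ⟨huF, huX⟩))
  have hsmaller : ((F ∆ {u, v}) \ (S ∪ X)).card < (F \ (S ∪ X)).card :=
    (Finset.card_le_card (symmDiff_pair_sdiff_subset huF hv Finset.subset_union_right)).trans_lt
      (Finset.card_erase_lt_of_mem hu)
  exact hsmaller.not_ge (hmin _ (mem_Fmin_of_card_le hF hexch (card_symmDiff_pair_le huF v)))

lemma IsDeltaMatroid.rankMin_add_minCardSdiff {D : SetSystem α} (hD : D.IsDeltaMatroid)
    {F₀ : Finset α} (hF₀ : F₀ ∈ D.Fmin) (S : Finset α) :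
    D.rankMin S + D.minCardSdiff S = F₀.card := by
  have hsplit : ∀ F ∈ D.Fmin, (F ∩ S).card + (F \ S).card = F₀.card := fun F hF => by
    rw [Finset.card_inter_add_card_sdiff, card_eq_of_mem_Fmin hF hF₀]
  apply le_antisymm
  · obtain ⟨F, hF, hr⟩ := exists_rankMin_eq ⟨F₀, hF₀⟩ S
    linarith [hsplit F hF, minCardSdiff_le (D.Fmin_subset hF) S]
  · obtain ⟨X, hX, hm⟩ := exists_minCardSdiff_eq hD.1 S
    obtain ⟨F, hF, hFX⟩ := hD.exists_mem_Fmin_subset_union hX S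
    have hFX' : F \ S ⊆ X \ S :=
      (Finset.sdiff_subset_sdiff hFX subset_rfl).trans (Finset.union_sdiff_left S X).subset
    linarith [hsplit F hF, card_inter_le_rankMin hF S, Finset.card_le_card hFX']

lemma IsDeltaMatroid.rankMin_sub_rankMin {D : SetSystem α} (hD : D.IsDeltaMatroid) (S : Finset α) :
    D.rankMin D.E - D.rankMin S = D.minCardSdiff S := by
  obtain ⟨F₀, hF₀⟩ := Fmin_nonempty hD.1
  have hE := hD.rankMin_add_minCardSdiff hF₀ D.E
  have hS := hD.rankMin_add_minCardSdiff hF₀ S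
  rw [minCardSdiff_E hD] at hE
  omega

lemma IsDeltaMatroid.charPoly_eq {D : SetSystem α} (hD : D.IsDeltaMatroid) (l : ℤ) :
    D.charPoly l = ∑ S ∈ D.E.powerset, (-1 : ℤ) ^ S.card * l ^ D.minCardSdiff S := by
  simp only [charPoly, hD.rankMin_sub_rankMin]

lemma symmDiff_insert_sdiff {B S f : Finset α} {s : α} (hs : s ∈ S) :
    (B ∆ insert s f) \ S = (B ∆ f) \ S := by
  ext a
  by_cases has : a = s
  · simp [has, hs]
  · simp [Finset.mem_symmDiff, has]

lemma image_F_lc {β : Type*} [DecidableEq β] (D : SetSystem α) {e : α} {φ : Finset α → β}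
    (hφ : ∀ f, φ (insert e f) = φ f) : (D.lc e).F.image φ = D.F.image φ := by
  have hsub : ∀ G : SetSystem α, (G.lc e).F.image φ ⊆ G.F.image φ := fun G => by
    intro n hn
    obtain ⟨f, hf, rfl⟩ := Finset.mem_image.1 hn
    rcases mem_lc.1 hf with ⟨hfG, -⟩ | ⟨⟨hef, hfe⟩, -⟩
    · exact Finset.mem_image_of_mem φ hfG
    · rw [← Finset.insert_erase hef, hφ]
      exact Finset.mem_image_of_mem φ hfe
  refine (hsub D).antisymm ?_
  conv_lhs => rw [← lc_lc D e]
  exact hsub (D.lc e)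

/-- Loop complementation at `s` only adds `s` to or removes it from feasible sets, which
`|B ∆ F \ S|` does not see when `s ∈ S`. -/
lemma minCardSdiff_twist_lc (D : SetSystem α) (B : Finset α) {S : Finset α} {s : α} (hs : s ∈ S) :
    ((D.lc s).twist B).minCardSdiff S = (D.twist B).minCardSdiff S := by
  have himage : ∀ G : SetSystem α, {n | ∃ F ∈ (G.twist B).F, n = (F \ S).card} =
      ↑(G.F.image fun f => ((B ∆ f) \ S).card) := fun G => by
    ext n
    simp [twist, eq_comm]
  rw [minCardSdiff, minCardSdiff, himage, himage,
    image_F_lc D fun f => by rw [symmDiff_insert_sdiff hs]]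

lemma sum_powerset_neg_one_pow_mul_eq_zero {R : Type*} [CommRing R] {E : Finset α} {s : α}
    (hs : s ∈ E) (g : Finset α → R) (hg : ∀ A, s ∉ A → g (insert s A) = g A) :
    ∑ A ∈ E.powerset, (-1 : R) ^ A.card * g A = 0 := by
  rw [← Finset.insert_erase hs, Finset.sum_powerset_insert (Finset.notMem_erase s E),
    ← Finset.sum_add_distrib]
  refine Finset.sum_eq_zero fun A hA => ?_
  have hsA : s ∉ A := fun h => Finset.notMem_erase s E (Finset.mem_powerset.1 hA h)
  rw [Finset.card_insert_of_notMem hsA, hg A hsA, pow_succ]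
  ring

lemma dual_lcSet (D : SetSystem α) (A : Finset α) : (D.lcSet A).dual = (D.lcSet A).twist D.E := by
  rw [dual, lcSet_E]

lemma minCardSdiff_dual_lcSet_insert (D : SetSystem α) {A S : Finset α} {s : α} (hs : s ∈ S)
    (hsA : s ∉ A) :
    (D.lcSet (insert s A)).dual.minCardSdiff S = (D.lcSet A).dual.minCardSdiff S := by
  rw [dual_lcSet, dual_lcSet, lcSet_insert D hsA, minCardSdiff_twist_lc _ _ hs]

lemma VfSafe.isDeltaMatroid_dual_lcSet {D : SetSystem α} (hD : D.VfSafe) {A : Finset α}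
    (hA : A ⊆ D.E) : (D.lcSet A).dual.IsDeltaMatroid :=
  hD _ <| .twist _ _ _ subset_rfl <| .lc _ _ A hA <| .refl D

/-- The Penrose polynomial as an alternating sum of characteristic polynomials of
the delta-matroids `D^{π(A)} = (D+A)*E`. -/
theorem penrose_eq_sum_charPoly (D : SetSystem α) (hD : D.VfSafe) (l : ℤ) :
    D.penrose l =
      ∑ A ∈ D.E.powerset, (-1 : ℤ) ^ A.card * ((D.lcSet A).dual).charPoly l := by
  calc D.penrose l
      = ∑ A ∈ D.E.powerset, (-1 : ℤ) ^ A.card * l ^ (D.lcSet A).dual.minCardSdiff ∅ :=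
        Finset.sum_congr rfl fun A hA => by
          rw [twist_dpivot D (Finset.mem_powerset.1 hA), ← dual_lcSet,
            minCard_eq_minCardSdiff_empty]
    _ = ∑ S ∈ D.E.powerset, (-1 : ℤ) ^ S.card *
          ∑ A ∈ D.E.powerset, (-1 : ℤ) ^ A.card * l ^ (D.lcSet A).dual.minCardSdiff S := by
        refine .trans ?_ (Finset.sum_eq_single_of_mem ∅ (Finset.empty_mem_powerset _)
          fun S hS hSne => ?_).symm
        · rw [Finset.card_empty, pow_zero, one_mul]
        obtain ⟨s, hs⟩ := Finset.nonempty_iff_ne_empty.2 hSne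
        rw [sum_powerset_neg_one_pow_mul_eq_zero (Finset.mem_powerset.1 hS hs) _
          fun A hsA => by rw [minCardSdiff_dual_lcSet_insert D hs hsA], mul_zero]
    _ = _ := by
        simp only [Finset.mul_sum]
        rw [Finset.sum_comm]
        refine Finset.sum_congr rfl fun A hA => ?_
        rw [(hD.isDeltaMatroid_dual_lcSet (Finset.mem_powerset.1 hA)).charPoly_eq, Finset.mul_sum]
        simp only [dual, lcSet_E, twist_E]
        exact Finset.sum_congr rfl fun S _ => by ring

end SetSystem
end

section
/- Let M be a matroid on a finite ground set E with rank function r, and let A ⊆ E. Then min{|A △ B| : B a base of M} = r(E) + |A| − 2·r(A) and max{|A △ B| : B a base of M} = 2·r(E−A) + |A| − r(E). In particular, all sets in {A △ B : B a base of M} have cardinalities of the same parity, so the twist M*A is an even delta-matroid. -/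
open scoped symmDiff Matroid

namespace PaperMatroid

variable {α : Type}

/-- The contraction `M/C`, defined via duality: `M/C = (M✶ ∖ C)✶`. -/
def contr (M : Matroid α) (C : Set α) : Matroid α := (M✶ ↾ (M.E \ C))✶

/-- The rank of a set `X`: the size of a largest independent subset of `X`. -/
noncomputable def rkFn (M : Matroid α) (X : Set α) : ℕ :=
  sSup {n : ℕ | ∃ I, M.Indep I ∧ I ⊆ X ∧ n = I.ncard}

/-- `F` is a minimum-cardinality member of the twist family `{A ∆ B : B a base of M}`. -/
def MinTwistMem (M : Matroid α) (A F : Set α) : Prop :=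
  (∃ B, M.IsBase B ∧ F = A ∆ B) ∧
    ∀ F', (∃ B, M.IsBase B ∧ F' = A ∆ B) → F.ncard ≤ F'.ncard

/-- `F` is a maximum-cardinality member of the twist family `{A ∆ B : B a base of M}`. -/
def MaxTwistMem (M : Matroid α) (A F : Set α) : Prop :=
  (∃ B, M.IsBase B ∧ F = A ∆ B) ∧
    ∀ F', (∃ B, M.IsBase B ∧ F' = A ∆ B) → F'.ncard ≤ F.ncard

/-- A circuit of `M`: a minimal dependent set. -/
def IsCircuit (M : Matroid α) (C : Set α) : Prop :=
  C ⊆ M.E ∧ ¬ M.Indep C ∧ ∀ X, X ⊂ C → M.Indep X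

/-- The circuit space of `M`: all disjoint unions of circuits (including `∅`). -/
def CircuitSpace (M : Matroid α) : Set (Set α) :=
  {X | ∃ 𝒞 : Finset (Set α), (∀ C ∈ 𝒞, IsCircuit M C) ∧
        (↑𝒞 : Set (Set α)).Pairwise Disjoint ∧ X = ⋃₀ ↑𝒞}

/-- The bicycle space of `M`: the intersection of the circuit space and the
cocircuit space (the circuit space of the dual). -/
def BicycleSpace (M : Matroid α) : Set (Set α) := CircuitSpace M ∩ CircuitSpace M✶

/-- A matroid is bipartite if every circuit has even cardinality. -/
def Bipartite (M : Matroid α) : Prop := ∀ C, IsCircuit M C → Even C.ncard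

/-- A matroid is Eulerian if its ground set is a disjoint union of circuits. -/
def Eulerian (M : Matroid α) : Prop :=
  ∃ 𝒞 : Finset (Set α), (∀ C ∈ 𝒞, IsCircuit M C) ∧
    (↑𝒞 : Set (Set α)).Pairwise Disjoint ∧ ⋃₀ ↑𝒞 = M.E

/-- Representability of a matroid over a field `K`: there is a map of the ground set
into a `K`-vector space under which a set is independent exactly when its image is
linearly independent. -/
def IsRepresentableOver (M : Matroid α) (K : Type) [Field K] : Prop :=
  ∃ (V : Type) (_ : AddCommGroup V) (_ : Module K V) (φ : α → V),
    ∀ I, I ⊆ M.E → (M.Indep I ↔ LinearIndependent K (I.restrict φ))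

/-- A binary matroid: one representable over `GF(2)`. -/
def Binary (M : Matroid α) : Prop := IsRepresentableOver M (ZMod 2)

/-!
For a base `B`, `|A ∆ B| = |A| + |B| - 2|A ∩ B|` and `|B| = r(E)`, so the parity of `|A ∆ B|`
does not depend on `B`. Minimising `|A ∆ B|` means maximising the independent set `A ∩ B ⊆ A`,
whose largest size `r(A)` is reached by extending a basis of `A` to a base. Maximising it means
minimising `|A ∩ B| = r(E) - |B ∩ (E - A)|`, i.e. maximising the independent set `B ∩ (E - A)`,
whose largest size is `r(E - A)`.
-/

open Set

lemma _root_.Set.ncard_symmDiff_add_two_mul_ncard_inter {s t : Set α} (hs : s.Finite)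
    (ht : t.Finite) : (s ∆ t).ncard + 2 * (s ∩ t).ncard = s.ncard + t.ncard := by
  rw [symmDiff_eq_sup_sdiff_inf, two_mul, ← add_assoc]
  change ((s ∪ t) \ (s ∩ t)).ncard + _ + _ = _
  rw [ncard_sdiff_add_ncard_of_subset (inter_subset_left.trans subset_union_left) (hs.union ht),
    ncard_union_add_ncard_inter s t hs ht]

section rkFn

variable {M : Matroid α} [M.RankFinite] {B I J X : Set α}

lemma cast_rkFn_eq_eRk (X : Set α) : (rkFn M X : ℕ∞) = M.eRk X := by
  obtain ⟨J, hJ⟩ := M.exists_isBasis' X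
  rw [← hJ.encard_eq_eRk, ← hJ.indep.finite.cast_ncard_eq, Nat.cast_inj]
  refine IsGreatest.csSup_eq ⟨⟨J, hJ.indep, hJ.subset, rfl⟩, ?_⟩
  rintro _ ⟨I, hI, hIX, rfl⟩
  rw [← Nat.cast_le (α := ℕ∞), hI.finite.cast_ncard_eq, hJ.indep.finite.cast_ncard_eq,
    hJ.encard_eq_eRk]
  exact hI.encard_le_eRk_of_subset hIX

lemma _root_.Matroid.IsBasis'.rkFn_eq_ncard (hJ : M.IsBasis' J X) : rkFn M X = J.ncard := by
  rw [← Nat.cast_inj (R := ℕ∞), cast_rkFn_eq_eRk, hJ.indep.finite.cast_ncard_eq,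
    hJ.encard_eq_eRk]

lemma _root_.Matroid.Indep.ncard_le_rkFn_of_subset (hI : M.Indep I) (hIX : I ⊆ X) :
    I.ncard ≤ rkFn M X := by
  rw [← Nat.cast_le (α := ℕ∞), cast_rkFn_eq_eRk, hI.finite.cast_ncard_eq]
  exact hI.encard_le_eRk_of_subset hIX

lemma _root_.Matroid.IsBase.ncard_eq_rkFn_ground (hB : M.IsBase B) : B.ncard = rkFn M M.E :=
  hB.isBasis_ground.isBasis'.rkFn_eq_ncard.symm

lemma _root_.Matroid.IsBase.ncard_inter_le_rkFn (hB : M.IsBase B) (X : Set α) :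
    (B ∩ X).ncard ≤ rkFn M X :=
  (hB.indep.inter_right X).ncard_le_rkFn_of_subset inter_subset_right

lemma exists_isBase_ncard_inter_eq_rkFn (hX : X ⊆ M.E) :
    ∃ B, M.IsBase B ∧ (B ∩ X).ncard = rkFn M X := by
  obtain ⟨J, hJ⟩ := M.exists_isBasis X hX
  obtain ⟨B, hB, rfl⟩ := hJ.exists_isBase
  exact ⟨B, hB, hJ.isBasis'.rkFn_eq_ncard.symm⟩

lemma _root_.Matroid.IsBase.ncard_inter_add_ncard_inter_compl (hB : M.IsBase B) (X : Set α) :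
    (B ∩ X).ncard + (B ∩ (M.E \ X)).ncard = rkFn M M.E := by
  rw [← inter_sdiff_assoc, inter_eq_self_of_subset_left hB.subset_ground,
    ncard_inter_add_ncard_sdiff_eq_ncard B X hB.finite, hB.ncard_eq_rkFn_ground]

lemma _root_.Matroid.IsBase.ncard_symmDiff (hB : M.IsBase B) {A : Set α} (hA : A.Finite) :
    ((A ∆ B).ncard : ℤ) = rkFn M M.E + A.ncard - 2 * (B ∩ A).ncard := by
  have h := ncard_symmDiff_add_two_mul_ncard_inter hA hB.finite
  rw [inter_comm, hB.ncard_eq_rkFn_ground] at h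
  omega

end rkFn

/-- The minimum and maximum cardinalities of members of `{A ∆ B : B a base of M}`
are `r(E) + |A| − 2r(A)` and `2r(E−A) + |A| − r(E)` respectively; in particular all
members have cardinalities of the same parity, so the twist `M*A` is an even
delta-matroid. -/
theorem twist_min_max_card (M : Matroid α) [M.Finite] (A : Set α) (hA : A ⊆ M.E) :
    IsLeast {n : ℤ | ∃ B, M.IsBase B ∧ n = (A ∆ B).ncard}
        ((rkFn M M.E : ℤ) + A.ncard - 2 * rkFn M A) ∧
      IsGreatest {n : ℤ | ∃ B, M.IsBase B ∧ n = (A ∆ B).ncard}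
        (2 * (rkFn M (M.E \ A) : ℤ) + A.ncard - rkFn M M.E) ∧
      ∀ B₁ B₂, M.IsBase B₁ → M.IsBase B₂ → (A ∆ B₁).ncard % 2 = (A ∆ B₂).ncard % 2 := by
  have hAfin : A.Finite := M.ground_finite.subset hA
  refine ⟨⟨?_, ?_⟩, ⟨?_, ?_⟩, ?_⟩
  · obtain ⟨B, hB, hBA⟩ := exists_isBase_ncard_inter_eq_rkFn hA
    exact ⟨B, hB, by rw [hB.ncard_symmDiff hAfin, hBA]⟩
  · rintro _ ⟨B, hB, rfl⟩
    have := hB.ncard_inter_le_rkFn A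
    rw [hB.ncard_symmDiff hAfin]
    omega
  · obtain ⟨B, hB, hBA⟩ := exists_isBase_ncard_inter_eq_rkFn (sdiff_subset : M.E \ A ⊆ M.E)
    have := hB.ncard_inter_add_ncard_inter_compl A
    refine ⟨B, hB, ?_⟩
    rw [hB.ncard_symmDiff hAfin]
    omega
  · rintro _ ⟨B, hB, rfl⟩
    have := hB.ncard_inter_add_ncard_inter_compl A
    have := hB.ncard_inter_le_rkFn (M.E \ A)
    rw [hB.ncard_symmDiff hAfin]
    omega
  · intro B₁ B₂ hB₁ hB₂
    have h₁ := hB₁.ncard_symmDiff hAfin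
    have h₂ := hB₂.ncard_symmDiff hAfin
    omega

end PaperMatroid
end
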